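/- The generalized GHZ state ψ_Θ = sin Θ |0000⟩ + cos Θ |1111⟩ is uniquely determined among pure states by its two-qubit reduced density matrices (within the family φ = sinΘ|0000⟩ + e^{iγ}cosΘ|1111⟩ of states with the same 2-RDMs) if and only if Θ = kπ/2 for some integer k, i.e., if and only if ψ_Θ = ±|0000⟩ or ±|1111⟩. -/

import Mathlib

open Matrix Complex

/-- Inner product `⟨ψ|φ⟩` of four-qubit states. -/
noncomputable def inner4 (ψ φ : (Fin 4 → Fin 2) → ℂ) : ℂ :=
  ∑ f : Fin 4 → Fin 2, (starRingEnd ℂ) (ψ f) * φ f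

/-- The generalized GHZ state `sin Θ |0000⟩ + e^{iγ} cos Θ |1111⟩`. -/
noncomputable def ghzPhase (Θ γ : ℝ) : (Fin 4 → Fin 2) → ℂ :=
  fun f => if f = (fun _ => 0) then (Real.sin Θ : ℂ)
    else if f = (fun _ => 1) then Complex.exp (γ * I) * (Real.cos Θ : ℂ) else 0

/-! The overlap of `ψ_Θ` with the phase-shifted state is `sin² Θ + e^{iγ} cos² Θ`, so the
fidelity is `1 - sin² (2Θ) (1 - cos γ) / 2`. This is `1` for every phase `γ` exactly when
`sin (2Θ) = 0`, and already the phase `γ = π` forces that. -/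

theorem Complex.sq_norm_ofReal_add_exp_mul_I_mul (a b γ : ℝ) :
    ‖(a : ℂ) + exp (γ * I) * b‖ ^ 2 = a ^ 2 + b ^ 2 + 2 * a * b * Real.cos γ := by
  rw [Complex.sq_norm, normSq_apply]
  simp only [add_re, add_im, mul_re, mul_im, ofReal_re, ofReal_im, exp_ofReal_mul_I_re,
    exp_ofReal_mul_I_im]
  linear_combination b ^ 2 * Real.sin_sq_add_cos_sq γ

theorem inner4_ghzPhase (Θ γ : ℝ) :
    inner4 (ghzPhase Θ 0) (ghzPhase Θ γ) =
      ((Real.sin Θ ^ 2 : ℝ) : ℂ) + exp (γ * I) * ((Real.cos Θ ^ 2 : ℝ) : ℂ) := by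
  have hne : (fun _ : Fin 4 => (0 : Fin 2)) ≠ (fun _ => 1) := fun h => by
    simpa using congrFun h 0
  rw [inner4, Finset.sum_eq_add_of_mem (fun _ => 0) (fun _ => 1)
    (Finset.mem_univ _) (Finset.mem_univ _) hne]
  · simp only [ghzPhase, if_neg hne, if_neg hne.symm, if_true, ofReal_zero, zero_mul, exp_zero,
      one_mul, conj_ofReal, ofReal_pow]
    ring
  · rintro f - ⟨hf₀, hf₁⟩
    simp [ghzPhase, hf₀, hf₁]

theorem sq_norm_inner4_ghzPhase (Θ γ : ℝ) :
    ‖inner4 (ghzPhase Θ 0) (ghzPhase Θ γ)‖ ^ 2 =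
      1 - Real.sin (2 * Θ) ^ 2 * (1 - Real.cos γ) / 2 := by
  rw [inner4_ghzPhase, Complex.sq_norm_ofReal_add_exp_mul_I_mul, Real.sin_two_mul]
  linear_combination (Real.sin Θ ^ 2 + Real.cos Θ ^ 2 + 1) * Real.sin_sq_add_cos_sq Θ

/-- The generalized GHZ state `ψ_Θ = sin Θ |0000⟩ + cos Θ |1111⟩` is uniquely determined
within the family `φ_γ = sin Θ |0000⟩ + e^{iγ} cos Θ |1111⟩` of pure states sharing its
two-qubit reduced density matrices (i.e. every member of the family has fidelity 1 with
`ψ_Θ`) if and only if `Θ = kπ/2` for some integer `k`. -/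
theorem ghz_udp_iff (Θ : ℝ) :
    (∀ γ : ℝ, ‖inner4 (ghzPhase Θ 0) (ghzPhase Θ γ)‖ ^ 2 = 1) ↔
    ∃ k : ℤ, Θ = k * Real.pi / 2 := by
  simp only [sq_norm_inner4_ghzPhase]
  calc (∀ γ : ℝ, 1 - Real.sin (2 * Θ) ^ 2 * (1 - Real.cos γ) / 2 = 1)
      ↔ Real.sin (2 * Θ) = 0 := by
        refine ⟨fun h => ?_, fun h γ => by simp [h]⟩
        have hπ := h Real.pi
        rw [Real.cos_pi] at hπ
        exact pow_eq_zero_iff two_ne_zero |>.mp (by linarith)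
    _ ↔ ∃ k : ℤ, Θ = k * Real.pi / 2 := by
        rw [Real.sin_eq_zero_iff]
        exact exists_congr fun k => by constructor <;> intro h <;> linarith
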